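/- Let M(t) be a matrix in SL(2, ℝ[t]) whose 2,2 entry is a polynomial in t of degree exactly l ≥ 1, whose 1,2 entry has degree at most l, and whose 1,1 and 2,1 entries have degree at most l−1. If t₀ ∈ ℝ is transcendental over the field generated by the coefficients of all these polynomials, then M(t₀) does not have finite order in PSL(2,ℝ). -/
import Mathlib

open Polynomial

/-- Normalized Chebyshev-like polynomials: u 0 = 0, u 1 = 1, u (k+2) = X * u (k+1) - u k. -/
noncomputable def stmt7u : ℕ → Polynomial ℚ
  | 0 => 0
  | 1 => 1
  | (k+2) => X * stmt7u (k+1) - stmt7u k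

lemma stmt7u_rec (j : ℕ) : stmt7u (j+2) = X * stmt7u (j+1) - stmt7u j := rfl

lemma stmt7u_spec : ∀ k : ℕ,
    ((stmt7u (k+1)).coeff k = 1 ∧ ∀ m, k < m → (stmt7u (k+1)).coeff m = 0) ∧
    ((stmt7u (k+2)).coeff (k+1) = 1 ∧ ∀ m, k+1 < m → (stmt7u (k+2)).coeff m = 0) := by
  intro k
  induction k with
  | zero =>
    refine ⟨⟨by simp [stmt7u], fun m hm => by
        have hm' : m ≠ 0 := by omega
        simp [stmt7u, Polynomial.coeff_one, hm']⟩, ?_, ?_⟩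
    · rw [stmt7u_rec]
      simp [stmt7u]
    · intro m hm
      obtain ⟨m, rfl⟩ : ∃ m', m = m' + 1 := ⟨m - 1, by omega⟩
      rw [stmt7u_rec, Polynomial.coeff_sub, coeff_X_mul]
      have h1 : m ≠ 0 := by omega
      simp [stmt7u, Polynomial.coeff_one, h1]
  | succ k ih =>
    refine ⟨ih.2, ?_, ?_⟩
    · rw [stmt7u_rec, Polynomial.coeff_sub, show k+1+1 = (k+1)+1 from rfl, coeff_X_mul,
        ih.2.1, ih.1.2 _ (by omega)]
      ring
    · intro m hm
      obtain ⟨m, rfl⟩ : ∃ m', m = m' + 1 := ⟨m - 1, by omega⟩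
      rw [stmt7u_rec, Polynomial.coeff_sub, coeff_X_mul, ih.2.2 _ (by omega),
        ih.1.2 _ (by omega)]
      ring

lemma stmt7u_ne_zero (k : ℕ) : stmt7u (k+1) ≠ 0 := fun h => by
  have := (stmt7u_spec k).1.1
  rw [h] at this
  simp at this

theorem stmt_7 (P : Matrix (Fin 2) (Fin 2) (Polynomial ℝ)) (K : Subfield ℝ)
    (hK : ∀ i j : Fin 2, ∀ n : ℕ, (P i j).coeff n ∈ K)
    (hdet : P.det = 1) (l : ℕ) (hl : 1 ≤ l)
    (h22 : (P 1 1).natDegree = l)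
    (h12 : (P 0 1).natDegree ≤ l)
    (h11 : (P 0 0).natDegree ≤ l - 1)
    (h21 : (P 1 0).natDegree ≤ l - 1)
    (t₀ : ℝ) (ht : Transcendental K t₀) :
    ∀ n : ℕ, 0 < n →
      (P.map (Polynomial.eval t₀)) ^ n ≠ 1 ∧ (P.map (Polynomial.eval t₀)) ^ n ≠ -1 := by
  set M : Matrix (Fin 2) (Fin 2) ℝ := P.map (Polynomial.eval t₀) with hMdef
  set s : ℝ := M 0 0 + M 1 1 with hs
  -- degree of trace polynomial
  have hdeg : (P 0 0 + P 1 1).natDegree = l := by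
    rw [Polynomial.natDegree_add_eq_right_of_natDegree_lt, h22]
    rw [h22]; omega
  -- s is transcendental over K
  have hstrans : Transcendental K s := by
    intro ⟨p, hp0, hps⟩
    have hcoef : ∀ i, (P 0 0 + P 1 1).coeff i ∈ K := fun i => by
      simpa [Polynomial.coeff_add] using add_mem (hK 0 0 i) (hK 1 1 i)
    set q : Polynomial K :=
      ∑ i ∈ Finset.range (l+1), Polynomial.monomial i (⟨(P 0 0 + P 1 1).coeff i, hcoef i⟩ : K)
      with hqdef
    have hqmap : q.map (algebraMap K ℝ) = P 0 0 + P 1 1 := by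
      rw [hqdef, Polynomial.map_sum]
      simp only [Polynomial.map_monomial]
      exact ((P 0 0 + P 1 1).as_sum_range' (l+1) (by omega)).symm
    have hqs : Polynomial.aeval t₀ q = s := by
      rw [Polynomial.aeval_def, ← Polynomial.eval_map, hqmap]
      simp [hs, hMdef, Matrix.map_apply]
    have hqnc : q ≠ Polynomial.C (q.coeff 0) := by
      intro h
      have : (P 0 0 + P 1 1).natDegree = 0 := by
        rw [← hqmap, h]; simp
      omega
    refine ht ⟨p.comp q, ?_, ?_⟩
    · rw [Ne, Polynomial.comp_eq_zero_iff]
      push_neg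
      exact ⟨hp0, fun _ => hqnc⟩
    · rw [Polynomial.aeval_comp, hqs, hps]
  -- determinant of M
  have hdet' : M 0 0 * M 1 1 - M 0 1 * M 1 0 = 1 := by
    rw [Matrix.det_fin_two] at hdet
    have := congrArg (Polynomial.eval t₀) hdet
    simpa [hMdef, Matrix.map_apply] using this
  -- Cayley–Hamilton for M
  have hsq : M * M = s • M - 1 := by
    rw [← Matrix.ext_iff]
    simp only [Fin.forall_fin_two, Matrix.mul_apply, Fin.sum_univ_two, Matrix.smul_apply,
      Matrix.sub_apply, Matrix.one_apply, smul_eq_mul, hs]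
    norm_num
    refine ⟨⟨?_, ?_⟩, ?_, ?_⟩
    · linear_combination -hdet'
    · ring
    · ring
    · linear_combination -hdet'
  -- Chebyshev-like evaluations
  set c : ℕ → ℝ := fun k => Polynomial.aeval s (stmt7u k) with hc
  have hc0 : c 0 = 0 := by simp [hc, stmt7u]
  have hc1 : c 1 = 1 := by simp [hc, stmt7u]
  have hcrec : ∀ k, c (k+2) = s * c (k+1) - c k := by
    intro k
    simp [hc, stmt7u, map_sub, map_mul]
  -- power formula
  have hpow : ∀ k : ℕ, M ^ (k+1) = c (k+1) • M - c k • 1 := by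
    intro k
    induction k with
    | zero => simp [hc0, hc1]
    | succ k ih =>
      rw [pow_succ, ih, sub_mul, Matrix.smul_mul, Matrix.smul_mul, one_mul, hsq,
        hcrec k]
      ext i j
      fin_cases i <;> fin_cases j <;>
        simp [Matrix.smul_apply, Matrix.sub_apply, Matrix.one_apply, Fin.mk_zero, Fin.mk_one, Fin.isValue] <;>
        first
        | ring
        | linear_combination hdet'
        | linear_combination -hdet'
        | linear_combination c (k+1) * hdet'
        | linear_combination -(c (k+1)) * hdet'
  -- main argument
  have key : ∀ n : ℕ, 0 < n → ∀ ε : ℝ, M ^ n = ε • 1 → False := by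
    intro n hn ε h
    obtain ⟨m, rfl⟩ : ∃ m, n = m + 1 := ⟨n - 1, by omega⟩
    rw [hpow m] at h
    have h00 : c (m+1) * M 0 0 - c m = ε := by
      have := congrFun (congrFun h 0) 0
      simpa [Matrix.smul_apply, Matrix.sub_apply, Matrix.one_apply] using this
    have h11' : c (m+1) * M 1 1 - c m = ε := by
      have := congrFun (congrFun h 1) 1
      simpa [Matrix.smul_apply, Matrix.sub_apply, Matrix.one_apply] using this
    have h01 : c (m+1) * M 0 1 = 0 := by
      have := congrFun (congrFun h 0) 1
      simpa [Matrix.smul_apply, Matrix.sub_apply, Matrix.one_apply] using this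
    have h10 : c (m+1) * M 1 0 = 0 := by
      have := congrFun (congrFun h 1) 0
      simpa [Matrix.smul_apply, Matrix.sub_apply, Matrix.one_apply] using this
    have halg : IsAlgebraic ℚ s := by
      by_cases hcz : c (m+1) = 0
      · exact ⟨stmt7u (m+1), stmt7u_ne_zero m, hcz⟩
      · have hM01 : M 0 1 = 0 := by
          rcases mul_eq_zero.mp h01 with h' | h'
          · exact absurd h' hcz
          · exact h'
        have hM10 : M 1 0 = 0 := by
          rcases mul_eq_zero.mp h10 with h' | h'
          · exact absurd h' hcz
          · exact h'
        have hMd : M 0 0 = M 1 1 := mul_left_cancel₀ hcz (by linarith)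
        have hsq1 : M 1 1 * M 1 1 = 1 := by
          rw [← hMd] at hdet' ⊢
          rw [hM01] at hdet'
          linarith [hdet']
        refine ⟨Polynomial.X ^ 2 - Polynomial.C 4,
          Polynomial.X_pow_sub_C_ne_zero (by norm_num) 4, ?_⟩
        have : s = 2 * M 1 1 := by rw [hs, hMd]; ring
        simp only [map_sub, map_pow, Polynomial.aeval_X, Polynomial.aeval_C]
        rw [this, show ((algebraMap ℚ ℝ) 4) = (4:ℝ) by norm_num]
        nlinarith [hsq1]
    -- transfer algebraicity from ℚ to K
    obtain ⟨p, hp0, hps⟩ := halg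
    refine hstrans ⟨p.map (algebraMap ℚ K), ?_, ?_⟩
    · simpa using (Polynomial.map_ne_zero_iff
        (algebraMap ℚ K).injective).mpr hp0
    · rw [Polynomial.aeval_map_algebraMap, hps]
  intro n hn
  refine ⟨fun h => key n hn 1 ?_, fun h => key n hn (-1) ?_⟩
  · rw [h, one_smul]
  · rw [h, neg_smul, one_smul]
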